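/- No interior collisions for minimizers: let u ∈ H¹([0,T];ℝ²) with u(0)=q ≠ 0, u(T)=0, and suppose u minimizes the Maupertuis functional M_h(u) = (1/2)∫₀ᵀ|u̇|² · ∫₀ᵀ(h+V(u)) over all such paths, with M_h(u) > 0 and h + V(u) > 0 a.e. Then u(t) ≠ 0 for every t ∈ (0,T). -/

import Mathlib

/-!
If `u` collides at an interior time `τ`, its restriction to `[0,τ]` is again a collision path
from `q`, and reparametrizing it over `[0,T]` keeps it admissible. The Maupertuis functional is
invariant under such time rescalings (the kinetic factor scales by `τ/T`, the potential factor by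
`T/τ`), so the rescaled path has value `½ (∫₀^τ |u̇|²) (∫₀^τ (h + V(u)))`. This is strictly smaller
than `M_h(u)`: the discarded interval `(τ,T]` contributes nonnegative kinetic energy and positive
potential, and `M_h(u) > 0`. That contradicts minimality.
-/

open Set MeasureTheory intervalIntegral

noncomputable def Vpot (α : ℝ) (U : EuclideanSpace ℝ (Fin 2) → ℝ)
    (x : EuclideanSpace ℝ (Fin 2)) : ℝ :=
  ‖x‖ ^ (-α) * U (‖x‖⁻¹ • x)

/-- The Maupertuis functional on `[0,T]`. -/
noncomputable def MaupertuisT (α h T : ℝ) (U : EuclideanSpace ℝ (Fin 2) → ℝ)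
    (u : ℝ → EuclideanSpace ℝ (Fin 2)) : ℝ :=
  ((1/2) * ∫ s in (0:ℝ)..T, ‖deriv u s‖ ^ 2) *
    (∫ s in (0:ℝ)..T, (h + Vpot α U (u s)))

/-- Membership in the class of (H¹) collision paths from `q` to `0` on `[0,T]`. -/
def AdmPath (α h T : ℝ) (U : EuclideanSpace ℝ (Fin 2) → ℝ)
    (q : EuclideanSpace ℝ (Fin 2)) (u : ℝ → EuclideanSpace ℝ (Fin 2)) : Prop :=
  ContinuousOn u (Icc 0 T) ∧ (∀ s ∈ Ioo (0:ℝ) T, DifferentiableAt ℝ u s) ∧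
    u 0 = q ∧ u T = 0 ∧
    IntervalIntegrable (fun s => ‖deriv u s‖ ^ 2) volume 0 T ∧
    IntervalIntegrable (fun s => h + Vpot α U (u s)) volume 0 T

section TimeRescale

variable {E : Type*} [NormedAddCommGroup E] [NormedSpace ℝ E]

def timeRescale (u : ℝ → E) (c : ℝ) : ℝ → E := fun t => u (c * t)

theorem deriv_timeRescale (u : ℝ → E) (c t : ℝ) :
    deriv (timeRescale u c) t = c • deriv u (c * t) :=
  deriv_comp_mul_left c u t

theorem sq_norm_deriv_timeRescale (u : ℝ → E) (c t : ℝ) :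
    ‖deriv (timeRescale u c) t‖ ^ 2 = c ^ 2 * ‖deriv u (c * t)‖ ^ 2 := by
  rw [deriv_timeRescale, norm_smul, mul_pow, Real.norm_eq_abs, sq_abs]

theorem integral_sq_norm_deriv_timeRescale (u : ℝ → E) {c : ℝ} (hc : c ≠ 0) (a b : ℝ) :
    ∫ t in a..b, ‖deriv (timeRescale u c) t‖ ^ 2 = c * ∫ t in c * a..c * b, ‖deriv u t‖ ^ 2 := by
  simp_rw [sq_norm_deriv_timeRescale, intervalIntegral.integral_const_mul,
    integral_comp_mul_left (fun t => ‖deriv u t‖ ^ 2) hc, smul_eq_mul]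
  field_simp

theorem IntervalIntegrable.comp_mul_left_of_ne_zero {f : ℝ → ℝ} {c a b : ℝ} (hc : c ≠ 0)
    (hf : IntervalIntegrable f volume (c * a) (c * b)) :
    IntervalIntegrable (fun t => f (c * t)) volume a b := by
  simpa only [mul_div_cancel_left₀ _ hc] using hf.comp_mul_left (c := c)

theorem intervalIntegrable_sq_norm_deriv_timeRescale {u : ℝ → E} {c a b : ℝ} (hc : c ≠ 0)
    (hu : IntervalIntegrable (fun t => ‖deriv u t‖ ^ 2) volume (c * a) (c * b)) :
    IntervalIntegrable (fun t => ‖deriv (timeRescale u c) t‖ ^ 2) volume a b := by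
  simp_rw [sq_norm_deriv_timeRescale]
  exact (hu.comp_mul_left_of_ne_zero hc).const_mul _

end TimeRescale

theorem mul_lt_add_mul_add {R : Type*} [CommRing R] [LinearOrder R] [IsStrictOrderedRing R]
    {a₁ a₂ b₁ b₂ : R} (ha₁ : 0 ≤ a₁) (ha₂ : 0 ≤ a₂) (hb₂ : 0 < b₂)
    (h : 0 < (a₁ + a₂) * (b₁ + b₂)) : a₁ * b₁ < (a₁ + a₂) * (b₁ + b₂) := by
  have hb : 0 < b₁ + b₂ := pos_of_mul_pos_right h (add_nonneg ha₁ ha₂)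
  rcases ha₁.eq_or_lt with rfl | ha₁
  · linarith
  · nlinarith [mul_pos ha₁ hb₂, mul_nonneg ha₂ hb.le]

theorem intervalIntegral_pos_of_ae_pos {f : ℝ → ℝ} {a b : ℝ} (hab : a < b)
    (hf : IntervalIntegrable f volume a b) (hpos : ∀ᵐ t, t ∈ Ioc a b → 0 < f t) :
    0 < ∫ t in a..b, f t := by
  have hnonneg : 0 ≤ᵐ[volume.restrict (uIoc a b)] f := by
    rw [uIoc_of_le hab.le, Filter.EventuallyLE, ae_restrict_iff' measurableSet_Ioc]
    filter_upwards [hpos] with t ht hmem using (ht hmem).le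
  have hsupp : Ioc a b ≤ᵐ[volume] (Function.support f ∩ Ioc a b : Set ℝ) := by
    filter_upwards [hpos] with t ht hmem using ⟨(ht hmem).ne', hmem⟩
  rw [integral_pos_iff_support_of_nonneg_ae' hnonneg hf]
  have hIoc : 0 < volume (Ioc a b) :=
    ((Measure.measure_Ioo_pos _).mpr hab).trans_le (measure_mono Ioo_subset_Ioc_self)
  exact ⟨hab, hIoc.trans_le (measure_mono_ae hsupp)⟩

theorem integral_mul_integral_lt_of_lt {f g : ℝ → ℝ} {a τ T : ℝ} (haτ : a ≤ τ) (hτT : τ < T)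
    (hf : IntervalIntegrable f volume a T) (hg : IntervalIntegrable g volume a T)
    (hf₀ : ∀ t, 0 ≤ f t) (hg₀ : ∀ᵐ t, t ∈ Ioc τ T → 0 < g t)
    (hpos : 0 < (∫ t in a..T, f t) * ∫ t in a..T, g t) :
    (∫ t in a..τ, f t) * (∫ t in a..τ, g t) < (∫ t in a..T, f t) * ∫ t in a..T, g t := by
  have hsub₁ : uIcc a τ ⊆ uIcc a T := uIcc_subset_uIcc_left (mem_uIcc_of_le haτ hτT.le)
  have hsub₂ : uIcc τ T ⊆ uIcc a T := uIcc_subset_uIcc_right (mem_uIcc_of_le haτ hτT.le)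
  rw [← integral_add_adjacent_intervals (hf.mono_set hsub₁) (hf.mono_set hsub₂),
    ← integral_add_adjacent_intervals (hg.mono_set hsub₁) (hg.mono_set hsub₂)] at hpos ⊢
  exact mul_lt_add_mul_add (intervalIntegral.integral_nonneg haτ fun t _ => hf₀ t)
    (intervalIntegral.integral_nonneg hτT.le fun t _ => hf₀ t)
    (intervalIntegral_pos_of_ae_pos hτT (hg.mono_set hsub₂) hg₀) hpos

section Maupertuis

variable {α h : ℝ} {U : EuclideanSpace ℝ (Fin 2) → ℝ} {q : EuclideanSpace ℝ (Fin 2)}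
  {u : ℝ → EuclideanSpace ℝ (Fin 2)}

theorem MaupertuisT_timeRescale {τ T : ℝ} (hτ : τ ≠ 0) (hT : T ≠ 0) :
    MaupertuisT α h T U (timeRescale u (τ / T)) = MaupertuisT α h τ U u := by
  have hc : τ / T ≠ 0 := div_ne_zero hτ hT
  have hcT : τ / T * T = τ := div_mul_cancel₀ τ hT
  have hpot := integral_comp_mul_left (fun s => h + Vpot α U (u s)) hc (a := 0) (b := T)
  rw [mul_zero, hcT, smul_eq_mul] at hpot
  rw [MaupertuisT, MaupertuisT, integral_sq_norm_deriv_timeRescale u hc, mul_zero, hcT]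
  simp only [timeRescale, hpot]
  field_simp

theorem MaupertuisT_lt_of_lt {τ T : ℝ} (hτ : 0 ≤ τ) (hτT : τ < T)
    (hkin : IntervalIntegrable (fun s => ‖deriv u s‖ ^ 2) volume 0 T)
    (hpot : IntervalIntegrable (fun s => h + Vpot α U (u s)) volume 0 T)
    (hpot₀ : ∀ᵐ t, t ∈ Ioc τ T → 0 < h + Vpot α U (u t))
    (hpos : 0 < MaupertuisT α h T U u) :
    MaupertuisT α h τ U u < MaupertuisT α h T U u := by
  simp only [MaupertuisT, mul_assoc] at hpos ⊢
  have hprod := pos_of_mul_pos_right hpos one_half_pos.le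
  exact mul_lt_mul_of_pos_left
    (integral_mul_integral_lt_of_lt hτ hτT hkin hpot (fun t => sq_nonneg _) hpot₀ hprod)
    one_half_pos

theorem AdmPath.of_collision {T τ : ℝ} (hu : AdmPath α h T U q u) (hτ : τ ∈ Ioc 0 T)
    (huτ : u τ = 0) :
    AdmPath α h τ U q u := by
  obtain ⟨hcont, hdiff, hu0, -, hkin, hpot⟩ := hu
  have hsub : uIcc 0 τ ⊆ uIcc 0 T := uIcc_subset_uIcc_left (mem_uIcc_of_le hτ.1.le hτ.2)
  exact ⟨hcont.mono (Icc_subset_Icc_right hτ.2),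
    fun s hs => hdiff s (Ioo_subset_Ioo_right hτ.2 hs), hu0, huτ,
    hkin.mono_set hsub, hpot.mono_set hsub⟩

theorem AdmPath.timeRescale {τ T : ℝ} (hu : AdmPath α h τ U q u) (hτ : 0 < τ) (hT : 0 < T) :
    AdmPath α h T U q (timeRescale u (τ / T)) := by
  obtain ⟨hcont, hdiff, hu0, huτ, hkin, hpot⟩ := hu
  set c := τ / T
  have hc : 0 < c := div_pos hτ hT
  have hcT : c * T = τ := div_mul_cancel₀ τ hT.ne'
  have hmaps : MapsTo (c * ·) (Icc 0 T) (Icc 0 τ) := fun s hs =>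
    ⟨mul_nonneg hc.le hs.1, hcT ▸ mul_le_mul_of_nonneg_left hs.2 hc.le⟩
  rw [← mul_zero c, ← hcT] at hkin hpot
  refine ⟨hcont.comp (continuous_const_mul c).continuousOn hmaps, fun s hs => ?_,
    show u (c * 0) = q by rwa [mul_zero], show u (c * T) = 0 by rwa [hcT],
    intervalIntegrable_sq_norm_deriv_timeRescale hc.ne' hkin,
    hpot.comp_mul_left_of_ne_zero hc.ne'⟩
  have hcs : c * s ∈ Ioo 0 τ :=
    ⟨mul_pos hc hs.1, hcT ▸ mul_lt_mul_of_pos_left hs.2 hc⟩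
  exact (hdiff _ hcs).comp s ((differentiableAt_id).const_mul c)

end Maupertuis

theorem minimizer_no_interior_collision_general
    (α h T : ℝ) (hT : 0 < T)
    (U : EuclideanSpace ℝ (Fin 2) → ℝ)
    (q : EuclideanSpace ℝ (Fin 2))
    (u : ℝ → EuclideanSpace ℝ (Fin 2))
    (hadm : AdmPath α h T U q u)
    (hmin : ∀ v, AdmPath α h T U q v → MaupertuisT α h T U u ≤ MaupertuisT α h T U v)
    (hpos : 0 < MaupertuisT α h T U u)
    (haepos : ∀ᵐ t, t ∈ Icc (0:ℝ) T → 0 < h + Vpot α U (u t)) :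
    ∀ t ∈ Ioo (0:ℝ) T, u t ≠ 0 := by
  rintro τ ⟨hτ, hτT⟩ huτ
  have hrescaled := (hadm.of_collision ⟨hτ, hτT.le⟩ huτ).timeRescale hτ hT
  have hle := hmin _ hrescaled
  rw [MaupertuisT_timeRescale hτ.ne' hT.ne'] at hle
  obtain ⟨-, -, -, -, hkin, hpot⟩ := hadm
  have hpot₀ : ∀ᵐ t, t ∈ Ioc τ T → 0 < h + Vpot α U (u t) :=
    haepos.mono fun t ht hmem => ht ⟨hτ.le.trans hmem.1.le, hmem.2⟩
  exact hle.not_gt (MaupertuisT_lt_of_lt hτ.le hτT hkin hpot hpot₀ hpos)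

/-- No interior collisions for minimizers: if `u` minimizes the Maupertuis
functional among collision paths from `q ≠ 0` to `0`, with `M_h(u) > 0` and
`h + V(u) > 0` a.e., then `u(t) ≠ 0` for all `t ∈ (0,T)`. -/
theorem minimizer_no_interior_collision
    (α h T : ℝ) (hα : α ∈ Set.Ioo (0:ℝ) 2) (hT : 0 < T)
    (U : EuclideanSpace ℝ (Fin 2) → ℝ) (hUcont : Continuous U)
    (hUpos : ∀ s : EuclideanSpace ℝ (Fin 2), ‖s‖ = 1 → 0 < U s)
    (q : EuclideanSpace ℝ (Fin 2)) (hq : q ≠ 0)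
    (u : ℝ → EuclideanSpace ℝ (Fin 2))
    (hadm : AdmPath α h T U q u)
    (hmin : ∀ v, AdmPath α h T U q v → MaupertuisT α h T U u ≤ MaupertuisT α h T U v)
    (hpos : 0 < MaupertuisT α h T U u)
    (haepos : ∀ᵐ t, t ∈ Icc (0:ℝ) T → 0 < h + Vpot α U (u t)) :
    ∀ t ∈ Ioo (0:ℝ) T, u t ≠ 0 :=
  minimizer_no_interior_collision_general α h T hT U q u hadm hmin hpos haepos
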